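/- arXiv:2404.05513 — 3 statements merged into one kernel-verified Lean document; each statement's English description precedes it below -/
import Mathlib

section
/- Let X be a set, let φ : X × X → ℂ, let C ≥ 0, and let I be a nonempty set. Define ψ : (X × I) × (X × I) → ℂ by ψ((x, i), (y, j)) = φ(x, y). Then φ is a Schur multiplier on X of norm at most C if and only if ψ is a Schur multiplier on X × I of norm at most C. (This expresses that the completely bounded norm of a Schur multiplier equals its operator norm: all amplifications of M_φ have the same norm.) -/
open scoped InnerProductSpace

noncomputable section

/-- `ℓ²(X)`: square-summable complex-valued functions on `X`. -/
abbrev ellTwo (X : Type*) : Type _ := lp (fun _ : X => ℂ) 2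

/-- The canonical orthonormal basis vector `δ_x` of `ℓ²(X)`. -/
def delta {X : Type*} (x : X) : ellTwo X :=
  letI : DecidableEq X := Classical.decEq X
  lp.single 2 x 1

/-- `φ : X × X → ℂ` is a Schur multiplier of norm at most `C` if there is a bounded
linear map `M` on `B(ℓ²(X))` with `‖M‖ ≤ C` such that
`⟪(M T) δ_y, δ_x⟫ = φ (x, y) * ⟪T δ_y, δ_x⟫` for all `T` and all `x, y`. -/
def IsSchurMultiplier {X : Type*} (φ : X × X → ℂ) (C : ℝ) : Prop :=
  ∃ M : (ellTwo X →L[ℂ] ellTwo X) →L[ℂ] (ellTwo X →L[ℂ] ellTwo X),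
    ‖M‖ ≤ C ∧
    ∀ (T : ellTwo X →L[ℂ] ellTwo X) (x y : X),
      ⟪(M T) (delta y), delta x⟫_ℂ = φ (x, y) * ⟪T (delta y), delta x⟫_ℂ

/-!
If `M` implements `φ` on `ℓ²(X)`, the amplified multiplier is defined coordinatewise by
`(N T η) (x, i) = ∑ y, conj (φ (x, y)) * (T (P_y η)) (x, i)`, where `P_y` projects onto the
fibre `{y} × I`. Write the fibres of `η` as `‖η_y‖ • u_y` with `‖u_y‖ ≤ 1`, and let
`V_η f = ∑ y, f y • (δ_y ⊗ u_y)`, a contraction `ℓ²(X) → ℓ²(X × I)`. Against a finitely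
supported `ξ`, both `∑ₚ conj (ξ p) * (N T η) p` and `⟪‖ξ_•‖, M (V_ξ† T V_η) ‖η_•‖⟫` expand
to `∑ x y, conj (φ (x, y)) * ⟪P_x ξ, T (P_y η)⟫`; so `|⟪ξ, N T η⟫| ≤ ‖M‖ ‖T‖ ‖η‖ ‖ξ‖`,
which gives `N T η ∈ ℓ²` and `‖N‖ ≤ ‖M‖`. Conversely, compressing to the rows and columns
`X × {i₀}` turns a multiplier for the amplified symbol into one for `φ`.
-/

open scoped ComplexConjugate InnerProduct

namespace ellTwo

variable {α : Type*}

lemma hasSum_norm_sq (f : ellTwo α) : HasSum (fun a => ‖f a‖ ^ 2) (‖f‖ ^ 2) := by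
  simpa using lp.hasSum_norm (p := 2) (by norm_num) f

lemma memℓp_of_summable {g : α → ℂ} (h : Summable fun a => ‖g a‖ ^ 2) : Memℓp g 2 :=
  memℓp_gen (by simpa using h)

lemma norm_le_of_sum_le (f : ellTwo α) {B : ℝ} (hB : 0 ≤ B)
    (h : ∀ s : Finset α, ∑ a ∈ s, ‖f a‖ ^ 2 ≤ B ^ 2) : ‖f‖ ≤ B :=
  lp.norm_le_of_forall_sum_le (p := 2) (by norm_num) hB (by simpa using h)

lemma hasSum_norm_const_mul_sq (c : ℂ) (v : ellTwo α) :
    HasSum (fun a => ‖c * v a‖ ^ 2) (‖c‖ ^ 2 * ‖v‖ ^ 2) := by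
  simpa [norm_mul, mul_pow] using (hasSum_norm_sq v).mul_left (‖c‖ ^ 2)

lemma inner_eq_sum {f : ellTwo α} {s : Finset α} (hf : ∀ a ∉ s, f a = 0) (g : ellTwo α) :
    ⟪f, g⟫_ℂ = ∑ a ∈ s, conj (f a) * g a := by
  refine (lp.hasSum_inner f g).unique ((hasSum_sum_of_ne_finset_zero fun a ha => ?_).congr_fun ?_)
  · simp [hf a ha]
  · intro a; simp [mul_comm]

lemma sum_norm_sq_le_of_forall_sum_mul_le {g : α → ℂ} {K : ℝ}
    (h : ∀ (s : Finset α) (ξ : ellTwo α), (∀ a ∉ s, ξ a = 0) →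
      ‖∑ a ∈ s, conj (ξ a) * g a‖ ≤ K * ‖ξ‖)
    (s : Finset α) : ∑ a ∈ s, ‖g a‖ ^ 2 ≤ K ^ 2 := by
  classical
  let ξ : ellTwo α := ⟨fun a => if a ∈ s then g a else 0,
    memℓp_of_summable (summable_of_ne_finset_zero (s := s) fun a ha => by simp [ha])⟩
  have hξ (a) (ha : a ∉ s) : ξ a = 0 := if_neg ha
  have hnorm : ‖ξ‖ ^ 2 = ∑ a ∈ s, ‖g a‖ ^ 2 := by
    rw [(hasSum_norm_sq ξ).unique (hasSum_sum_of_ne_finset_zero fun a ha => by simp [hξ a ha])]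
    exact Finset.sum_congr rfl fun a ha => by rw [show ξ a = g a from if_pos ha]
  have hpair : ∑ a ∈ s, conj (ξ a) * g a = ((∑ a ∈ s, ‖g a‖ ^ 2 : ℝ) : ℂ) := by
    push_cast
    refine Finset.sum_congr rfl fun a ha => ?_
    change conj (if a ∈ s then g a else 0) * g a = _
    rw [if_pos ha, RCLike.conj_mul]
    norm_cast
  have hle := h s ξ hξ
  rw [hpair, Complex.norm_real, Real.norm_of_nonneg (by positivity), ← hnorm] at hle
  nlinarith [norm_nonneg ξ]

end ellTwo

section Delta

variable {X : Type*}

lemma delta_eq_single [DecidableEq X] (x : X) : (delta x : ellTwo X) = lp.single 2 x 1 := by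
  unfold delta
  congr
  exact Subsingleton.elim _ _

lemma delta_apply [DecidableEq X] (x y : X) : (delta x : ellTwo X) y = if y = x then 1 else 0 := by
  rw [delta_eq_single, lp.single_apply, Pi.single_apply]

lemma inner_delta_left (x : X) (f : ellTwo X) : ⟪delta x, f⟫_ℂ = f x := by
  classical
  rw [delta_eq_single, lp.inner_single_left]
  simp

lemma inner_delta_right (f : ellTwo X) (x : X) : ⟪f, delta x⟫_ℂ = conj (f x) := by
  rw [← inner_conj_symm, inner_delta_left]

lemma ellTwo.hasSum_smul_delta (f : ellTwo X) : HasSum (fun x => f x • delta x) f := by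
  classical
  simpa [delta_eq_single, ← lp.single_smul] using lp.hasSum_single (p := 2) (by norm_num) f

end Delta

section Sandwich

variable {E F F' G : Type*} [NormedAddCommGroup E] [NormedSpace ℂ E]
  [NormedAddCommGroup F] [NormedSpace ℂ F] [NormedAddCommGroup F'] [NormedSpace ℂ F']
  [NormedAddCommGroup G] [NormedSpace ℂ G]

def sandwichL (A : F →L[ℂ] G) (B : E →L[ℂ] F') : (F' →L[ℂ] F) →L[ℂ] (E →L[ℂ] G) :=
  (ContinuousLinearMap.compL ℂ E F G A).comp ((ContinuousLinearMap.compL ℂ E F' F).flip B)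

@[simp] lemma sandwichL_apply (A : F →L[ℂ] G) (B : E →L[ℂ] F') (T : F' →L[ℂ] F) :
    sandwichL A B T = A ∘L T ∘L B := rfl

lemma norm_sandwichL_le_one {A : F →L[ℂ] G} {B : E →L[ℂ] F'} (hA : ‖A‖ ≤ 1) (hB : ‖B‖ ≤ 1) :
    ‖sandwichL A B‖ ≤ 1 := by
  refine ContinuousLinearMap.opNorm_le_bound _ zero_le_one fun T => ?_
  calc ‖A ∘L T ∘L B‖ ≤ ‖A‖ * (‖T‖ * ‖B‖) :=
        (A.opNorm_comp_le _).trans (by gcongr; exact T.opNorm_comp_le B)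
    _ ≤ 1 * (‖T‖ * 1) := by gcongr
    _ = 1 * ‖T‖ := by ring

end Sandwich

def IsSchurMap {X : Type*} (φ : X × X → ℂ)
    (M : (ellTwo X →L[ℂ] ellTwo X) →L[ℂ] (ellTwo X →L[ℂ] ellTwo X)) : Prop :=
  ∀ (T : ellTwo X →L[ℂ] ellTwo X) (x y : X),
    ⟪(M T) (delta y), delta x⟫_ℂ = φ (x, y) * ⟪T (delta y), delta x⟫_ℂ

lemma IsSchurMap.apply_delta_apply {X : Type*} {φ : X × X → ℂ}
    {M : (ellTwo X →L[ℂ] ellTwo X) →L[ℂ] (ellTwo X →L[ℂ] ellTwo X)} (hM : IsSchurMap φ M)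
    (S : ellTwo X →L[ℂ] ellTwo X) (x y : X) :
    M S (delta y) x = conj (φ (x, y)) * S (delta y) x := by
  simpa [inner_delta_right] using congr_arg conj (hM S x y)

namespace ellTwo

variable {X Y : Type*} {e : X → Y}

def comapL (e : X → Y) (he : Function.Injective e) : ellTwo Y →L[ℂ] ellTwo X :=
  LinearMap.mkContinuous
    { toFun := fun g => ⟨g ∘ e, memℓp_of_summable ((hasSum_norm_sq g).summable.comp_injective he)⟩
      map_add' := fun _ _ => rfl
      map_smul' := fun _ _ => rfl }
    1 fun g => by
      rw [one_mul]
      refine norm_le_of_sum_le _ (norm_nonneg g) fun s => ?_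
      change ∑ x ∈ s, ‖g (e x)‖ ^ 2 ≤ _
      simpa [Finset.sum_map] using
        lp.sum_rpow_le_norm_rpow (p := 2) (by norm_num) g (s.map ⟨e, he⟩)

@[simp] lemma comapL_apply (he : Function.Injective e) (g : ellTwo Y) (x : X) :
    comapL e he g x = g (e x) := rfl

lemma norm_comapL_le (he : Function.Injective e) : ‖comapL e he‖ ≤ 1 :=
  LinearMap.mkContinuous_norm_le _ zero_le_one _

lemma comapL_delta (he : Function.Injective e) (x : X) : comapL e he (delta (e x)) = delta x := by
  classical
  ext x'
  simp [delta_apply, he.eq_iff]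

lemma adjoint_comapL_delta (he : Function.Injective e) (x : X) :
    ((comapL e he)†) (delta x) = delta (e x) :=
  ext_inner_left ℂ fun g => by
    rw [ContinuousLinearMap.adjoint_inner_right, inner_delta_right, inner_delta_right,
      comapL_apply]

end ellTwo

theorem IsSchurMultiplier.comp_injective {X Y : Type*} {ψ : Y × Y → ℂ} {C : ℝ}
    (hψ : IsSchurMultiplier ψ C) {e : X → Y} (he : Function.Injective e) :
    IsSchurMultiplier (fun p => ψ (e p.1, e p.2)) C := by
  obtain ⟨N, hNC, hN⟩ := hψ
  set R := ellTwo.comapL e he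
  have hR : ‖R‖ ≤ 1 := ellTwo.norm_comapL_le he
  have hR' : ‖R†‖ ≤ 1 := by rwa [LinearIsometryEquiv.norm_map]
  refine ⟨sandwichL R (R†) ∘L N ∘L sandwichL (R†) R, ?_, fun T x y => ?_⟩
  · calc _ ≤ ‖sandwichL R (R†)‖ * (‖N‖ * ‖sandwichL (R†) R‖) :=
          (ContinuousLinearMap.opNorm_comp_le _ _).trans
            (by gcongr; exact ContinuousLinearMap.opNorm_comp_le _ _)
      _ ≤ 1 * (C * 1) := by
          gcongr
          exacts [norm_sandwichL_le_one hR hR', (norm_nonneg N).trans hNC,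
            norm_sandwichL_le_one hR' hR]
      _ = C := by ring
  · simp only [ContinuousLinearMap.comp_apply, sandwichL_apply]
    rw [← ContinuousLinearMap.adjoint_inner_right, ellTwo.adjoint_comapL_delta,
      ellTwo.adjoint_comapL_delta, hN]
    simp only [ContinuousLinearMap.comp_apply, ContinuousLinearMap.adjoint_inner_left, R,
      ellTwo.comapL_delta]

section Blocks

variable {X I : Type*}

def fiber (η : ellTwo (X × I)) (x : X) : ellTwo I :=
  ellTwo.comapL (Prod.mk x) (Prod.mk_right_injective x) η

lemma hasSum_norm_fiber_sq (η : ellTwo (X × I)) :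
    HasSum (fun x => ‖fiber η x‖ ^ 2) (‖η‖ ^ 2) :=
  (ellTwo.hasSum_norm_sq η).prod_fiberwise fun x => ellTwo.hasSum_norm_sq (fiber η x)

def fiberNorms (η : ellTwo (X × I)) : ellTwo X :=
  ⟨fun x => (‖fiber η x‖ : ℂ),
    ellTwo.memℓp_of_summable (by simpa using (hasSum_norm_fiber_sq η).summable)⟩

@[simp] lemma fiberNorms_apply (η : ellTwo (X × I)) (x : X) :
    fiberNorms η x = (‖fiber η x‖ : ℂ) := rfl

lemma norm_fiberNorms (η : ellTwo (X × I)) : ‖fiberNorms η‖ = ‖η‖ := by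
  have h := (ellTwo.hasSum_norm_sq (fiberNorms η)).unique (by simpa using hasSum_norm_fiber_sq η)
  exact (sq_eq_sq₀ (norm_nonneg _) (norm_nonneg _)).1 h

lemma fiberNorms_eq_zero [DecidableEq X] {η : ellTwo (X × I)} {s : Finset (X × I)}
    (hη : ∀ p ∉ s, η p = 0) {x : X} (hx : x ∉ s.image Prod.fst) : fiberNorms η x = 0 := by
  rw [fiberNorms_apply, Complex.ofReal_eq_zero, norm_eq_zero]
  ext i
  exact hη _ fun h => hx (Finset.mem_image_of_mem Prod.fst h)

/-- `0` when the fibre vanishes, as `‖0‖⁻¹ = 0`. -/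
def fiberDir (η : ellTwo (X × I)) (x : X) : ellTwo I := ((‖fiber η x‖⁻¹ : ℝ) : ℂ) • fiber η x

lemma norm_fiberDir_le (η : ellTwo (X × I)) (x : X) : ‖fiberDir η x‖ ≤ 1 := by
  rw [fiberDir, norm_smul, Complex.norm_real, norm_inv, norm_norm]
  exact inv_mul_le_one

lemma fiber_eq_smul_fiberDir (η : ellTwo (X × I)) (x : X) :
    fiber η x = (‖fiber η x‖ : ℂ) • fiberDir η x := by
  rcases eq_or_ne (fiber η x) 0 with h | h
  · simp [h]
  · rw [fiberDir, smul_smul, ← Complex.ofReal_mul, mul_inv_cancel₀ (norm_ne_zero_iff.2 h),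
      Complex.ofReal_one, one_smul]

lemma summable_norm_mul_sq (f : ellTwo X) {u : X → ellTwo I} (hu : ∀ x, ‖u x‖ ≤ 1) :
    Summable fun p : X × I => ‖f p.1 * u p.1 p.2‖ ^ 2 := by
  have hsum : Summable fun x => ‖f x‖ ^ 2 * ‖u x‖ ^ 2 :=
    (ellTwo.hasSum_norm_sq f).summable.of_nonneg_of_le (fun _ => by positivity)
      fun x => mul_le_of_le_one_right (sq_nonneg _) (pow_le_one₀ (norm_nonneg _) (hu x))
  have hfib (x : X) := ellTwo.hasSum_norm_const_mul_sq (f x) (u x)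
  refine (summable_prod_of_nonneg (f := fun p : X × I => ‖f p.1 * u p.1 p.2‖ ^ 2)
    fun _ => sq_nonneg _).2 ⟨fun x => (hfib x).summable, ?_⟩
  simpa only [(hfib _).tsum_eq] using hsum

def blockEmbedding (u : X → ellTwo I) (hu : ∀ x, ‖u x‖ ≤ 1) : ellTwo X →L[ℂ] ellTwo (X × I) :=
  LinearMap.mkContinuous
    { toFun := fun f => ⟨fun p => f p.1 * u p.1 p.2,
        ellTwo.memℓp_of_summable (summable_norm_mul_sq f hu)⟩
      map_add' := fun f g => lp.ext <| funext fun p => add_mul (f p.1) (g p.1) _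
      map_smul' := fun c f => lp.ext <| funext fun p => mul_assoc c (f p.1) _ }
    1 fun f => by
      rw [one_mul, ← sq_le_sq₀ (norm_nonneg _) (norm_nonneg _)]
      refine hasSum_le (fun x => ?_) ((ellTwo.hasSum_norm_sq _).prod_fiberwise
        fun x => ellTwo.hasSum_norm_const_mul_sq (f x) (u x)) (ellTwo.hasSum_norm_sq f)
      exact mul_le_of_le_one_right (sq_nonneg _) (pow_le_one₀ (norm_nonneg _) (hu x))

@[simp] lemma blockEmbedding_apply (u : X → ellTwo I) (hu : ∀ x, ‖u x‖ ≤ 1) (f : ellTwo X)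
    (p : X × I) : blockEmbedding u hu f p = f p.1 * u p.1 p.2 := rfl

lemma norm_blockEmbedding_le (u : X → ellTwo I) (hu : ∀ x, ‖u x‖ ≤ 1) :
    ‖blockEmbedding u hu‖ ≤ 1 :=
  LinearMap.mkContinuous_norm_le _ zero_le_one _

def fiberEmbedding (η : ellTwo (X × I)) : ellTwo X →L[ℂ] ellTwo (X × I) :=
  blockEmbedding (fiberDir η) (norm_fiberDir_le η)

lemma norm_fiberEmbedding_le (η : ellTwo (X × I)) : ‖fiberEmbedding η‖ ≤ 1 :=
  norm_blockEmbedding_le _ _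

variable [DecidableEq X]

def blockProj (y : X) : ellTwo (X × I) →ₗ[ℂ] ellTwo (X × I) where
  toFun η := ⟨fun p => if p.1 = y then η p else 0, η.2.mono' fun p => by split_ifs <;> simp⟩
  map_add' η ζ := lp.ext <| funext fun p => by
    change (if p.1 = y then η p + ζ p else 0) =
      (if p.1 = y then η p else 0) + (if p.1 = y then ζ p else 0)
    split_ifs <;> simp
  map_smul' c η := lp.ext <| funext fun p => by
    change (if p.1 = y then c * η p else 0) = c * (if p.1 = y then η p else 0)
    split_ifs <;> simp

@[simp] lemma blockProj_apply (y : X) (η : ellTwo (X × I)) (p : X × I) :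
    blockProj y η p = if p.1 = y then η p else 0 := rfl

lemma blockProj_delta [DecidableEq I] (y : X) (q : X × I) :
    blockProj y (delta q) = if q.1 = y then delta q else 0 := by
  ext p
  split_ifs with hq <;> by_cases hp : p = q <;> simp_all [delta_apply]

lemma blockProj_eq_smul_fiberEmbedding (η : ellTwo (X × I)) (y : X) :
    blockProj y η = fiberNorms η y • fiberEmbedding η (delta y) := by
  ext ⟨x, i⟩
  rw [lp.coeFn_smul, Pi.smul_apply, fiberEmbedding, blockEmbedding_apply, blockProj_apply,
    delta_apply]
  by_cases h : x = y
  · subst h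
    rw [if_pos rfl, if_pos rfl, one_mul]
    exact congr_arg (fun v : ellTwo I => v i) (fiber_eq_smul_fiberDir η x)
  · simp [h]

lemma inner_blockProj_eq_sum {ξ : ellTwo (X × I)} {s : Finset (X × I)}
    (hξ : ∀ p ∉ s, ξ p = 0) (x : X) (z : ellTwo (X × I)) :
    ⟪blockProj x ξ, z⟫_ℂ = ∑ p ∈ s with p.1 = x, conj (ξ p) * z p := by
  rw [ellTwo.inner_eq_sum (s := {p ∈ s | p.1 = x}) _ z]
  · refine Finset.sum_congr rfl fun p hp => ?_
    rw [blockProj_apply, if_pos (Finset.mem_filter.1 hp).2]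
  · intro p hp
    rw [Finset.mem_filter, not_and_or] at hp
    rcases hp with hp | hp
    · rw [blockProj_apply, hξ p hp, ite_self]
    · rw [blockProj_apply, if_neg hp]

lemma inner_blockProj_blockProj (ξ η : ellTwo (X × I)) (T : ellTwo (X × I) →L[ℂ] ellTwo (X × I))
    (x y : X) :
    ⟪blockProj x ξ, T (blockProj y η)⟫_ℂ = fiberNorms ξ x * fiberNorms η y *
      sandwichL ((fiberEmbedding ξ)†) (fiberEmbedding η) T (delta y) x := by
  rw [blockProj_eq_smul_fiberEmbedding, blockProj_eq_smul_fiberEmbedding, map_smul,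
    inner_smul_left, inner_smul_right, sandwichL_apply, ContinuousLinearMap.comp_apply,
    ContinuousLinearMap.comp_apply, ← inner_delta_left x (((fiberEmbedding ξ)†) _),
    ContinuousLinearMap.adjoint_inner_right, fiberNorms_apply, Complex.conj_ofReal, mul_assoc]

end Blocks

section Amplification

variable {X I : Type*} [DecidableEq X] {φ : X × X → ℂ}
  {M : (ellTwo X →L[ℂ] ellTwo X) →L[ℂ] (ellTwo X →L[ℂ] ellTwo X)}

/-- The inner product in `IsSchurMultiplier` is conjugate-linear in its first argument, so `M`
multiplies coordinates by `conj φ`. -/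
def amplifiedApply (φ : X × X → ℂ) (T : ellTwo (X × I) →L[ℂ] ellTwo (X × I))
    (η : ellTwo (X × I)) (p : X × I) : ℂ :=
  ∑' y, conj (φ (p.1, y)) * T (blockProj y η) p

/-- Both sides expand to the sum over `y` of
`∑ x ∈ s.image Prod.fst, conj (φ (x, y)) * ⟪blockProj x ξ, T (blockProj y η)⟫`. -/
lemma hasSum_amplified_pairing (hM : IsSchurMap φ M)
    (T : ellTwo (X × I) →L[ℂ] ellTwo (X × I)) (η ξ : ellTwo (X × I)) {s : Finset (X × I)}
    (hξ : ∀ p ∉ s, ξ p = 0) :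
    HasSum (fun y => ∑ p ∈ s, conj (ξ p) * (conj (φ (p.1, y)) * T (blockProj y η) p))
      ⟪fiberNorms ξ,
        M (sandwichL ((fiberEmbedding ξ)†) (fiberEmbedding η) T) (fiberNorms η)⟫_ℂ := by
  set S := sandwichL ((fiberEmbedding ξ)†) (fiberEmbedding η) T
  have h := (ellTwo.hasSum_smul_delta (fiberNorms η)).mapL ((innerSL ℂ (fiberNorms ξ)).comp (M S))
  simp only [ContinuousLinearMap.comp_apply, innerSL_apply_apply, map_smul, smul_eq_mul] at h
  refine h.congr_fun fun y => ?_
  calc ∑ p ∈ s, conj (ξ p) * (conj (φ (p.1, y)) * T (blockProj y η) p)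
      = ∑ x ∈ s.image Prod.fst, conj (φ (x, y)) * ⟪blockProj x ξ, T (blockProj y η)⟫_ℂ := by
        rw [← Finset.sum_fiberwise_of_maps_to fun p hp => Finset.mem_image_of_mem Prod.fst hp]
        refine Finset.sum_congr rfl fun x _ => ?_
        rw [inner_blockProj_eq_sum hξ, Finset.mul_sum]
        refine Finset.sum_congr rfl fun p hp => ?_
        rw [(Finset.mem_filter.1 hp).2]
        ring
    _ = fiberNorms η y * ⟪fiberNorms ξ, M S (delta y)⟫_ℂ := by
        rw [ellTwo.inner_eq_sum fun x hx => fiberNorms_eq_zero hξ hx, Finset.mul_sum]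
        refine Finset.sum_congr rfl fun x _ => ?_
        rw [inner_blockProj_blockProj, hM.apply_delta_apply, fiberNorms_apply,
          Complex.conj_ofReal]
        ring

lemma hasSum_amplifiedApply (hM : IsSchurMap φ M) (T : ellTwo (X × I) →L[ℂ] ellTwo (X × I))
    (η : ellTwo (X × I)) (p : X × I) :
    HasSum (fun y => conj (φ (p.1, y)) * T (blockProj y η) p) (amplifiedApply φ T η p) := by
  classical
  have hδ : ∀ q ∉ ({p} : Finset (X × I)), (delta p : ellTwo (X × I)) q = 0 := fun q hq => by
    rw [delta_apply, if_neg (Finset.notMem_singleton.1 hq)]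
  have h := (hasSum_amplified_pairing hM T η (delta p) hδ).summable
  simpa [delta_apply, amplifiedApply] using h.hasSum

lemma norm_sum_mul_amplifiedApply_le (hM : IsSchurMap φ M)
    (T : ellTwo (X × I) →L[ℂ] ellTwo (X × I)) (η ξ : ellTwo (X × I)) {s : Finset (X × I)}
    (hξ : ∀ p ∉ s, ξ p = 0) :
    ‖∑ p ∈ s, conj (ξ p) * amplifiedApply φ T η p‖ ≤ ‖M‖ * ‖T‖ * ‖η‖ * ‖ξ‖ := by
  set S := sandwichL ((fiberEmbedding ξ)†) (fiberEmbedding η) T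
  have hS : ‖S‖ ≤ ‖T‖ := by
    refine (ContinuousLinearMap.le_opNorm _ _).trans (mul_le_of_le_one_left (norm_nonneg T) ?_)
    refine norm_sandwichL_le_one ?_ (norm_fiberEmbedding_le η)
    rw [LinearIsometryEquiv.norm_map]
    exact norm_fiberEmbedding_le ξ
  have hpair :
      ∑ p ∈ s, conj (ξ p) * amplifiedApply φ T η p = ⟪fiberNorms ξ, M S (fiberNorms η)⟫_ℂ :=
    (hasSum_sum fun p _ => (hasSum_amplifiedApply hM T η p).mul_left _).unique
      (hasSum_amplified_pairing hM T η ξ hξ)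
  calc ‖∑ p ∈ s, conj (ξ p) * amplifiedApply φ T η p‖
      ≤ ‖fiberNorms ξ‖ * (‖M‖ * ‖S‖ * ‖fiberNorms η‖) := by
        rw [hpair]
        exact (norm_inner_le_norm _ _).trans
          (by gcongr; exact (M S).le_of_opNorm_le (M.le_opNorm S) _)
    _ ≤ ‖ξ‖ * (‖M‖ * ‖T‖ * ‖η‖) := by rw [norm_fiberNorms, norm_fiberNorms]; gcongr
    _ = ‖M‖ * ‖T‖ * ‖η‖ * ‖ξ‖ := by ring

lemma sum_norm_amplifiedApply_sq_le (hM : IsSchurMap φ M)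
    (T : ellTwo (X × I) →L[ℂ] ellTwo (X × I)) (η : ellTwo (X × I)) (s : Finset (X × I)) :
    ∑ p ∈ s, ‖amplifiedApply φ T η p‖ ^ 2 ≤ (‖M‖ * ‖T‖ * ‖η‖) ^ 2 :=
  ellTwo.sum_norm_sq_le_of_forall_sum_mul_le
    (fun _ ξ hξ => norm_sum_mul_amplifiedApply_le hM T η ξ hξ) s

def amplifiedVec (hM : IsSchurMap φ M) (T : ellTwo (X × I) →L[ℂ] ellTwo (X × I))
    (η : ellTwo (X × I)) : ellTwo (X × I) :=
  ⟨amplifiedApply φ T η, ellTwo.memℓp_of_summable <| summable_of_sum_le (fun _ => sq_nonneg _)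
    (sum_norm_amplifiedApply_sq_le hM T η)⟩

@[simp] lemma amplifiedVec_apply (hM : IsSchurMap φ M) (T : ellTwo (X × I) →L[ℂ] ellTwo (X × I))
    (η : ellTwo (X × I)) (p : X × I) : amplifiedVec hM T η p = amplifiedApply φ T η p := rfl

lemma norm_amplifiedVec_le (hM : IsSchurMap φ M) (T : ellTwo (X × I) →L[ℂ] ellTwo (X × I))
    (η : ellTwo (X × I)) : ‖amplifiedVec hM T η‖ ≤ ‖M‖ * ‖T‖ * ‖η‖ :=
  ellTwo.norm_le_of_sum_le _ (by positivity) (sum_norm_amplifiedApply_sq_le hM T η)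

def amplification (hM : IsSchurMap φ M) :
    (ellTwo (X × I) →L[ℂ] ellTwo (X × I)) →L[ℂ] (ellTwo (X × I) →L[ℂ] ellTwo (X × I)) :=
  LinearMap.mkContinuous₂
    (LinearMap.mk₂ ℂ (amplifiedVec hM)
      (fun T T' η => lp.ext <| funext fun p => by
        simp only [amplifiedVec_apply, amplifiedApply, lp.coeFn_add, Pi.add_apply, add_apply,
          mul_add]
        exact (hasSum_amplifiedApply hM T η p).summable.tsum_add
          (hasSum_amplifiedApply hM T' η p).summable)
      (fun c T η => lp.ext <| funext fun p => by
        simp only [amplifiedVec_apply, amplifiedApply, lp.coeFn_smul, Pi.smul_apply, smul_apply,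
          smul_eq_mul, mul_left_comm _ c, tsum_mul_left])
      (fun T η η' => lp.ext <| funext fun p => by
        simp only [amplifiedVec_apply, amplifiedApply, lp.coeFn_add, Pi.add_apply, map_add,
          mul_add]
        exact (hasSum_amplifiedApply hM T η p).summable.tsum_add
          (hasSum_amplifiedApply hM T η' p).summable)
      (fun c T η => lp.ext <| funext fun p => by
        simp only [amplifiedVec_apply, amplifiedApply, lp.coeFn_smul, Pi.smul_apply, map_smul,
          smul_eq_mul, mul_left_comm _ c, tsum_mul_left]))
    ‖M‖ (norm_amplifiedVec_le hM)

lemma norm_amplification_le (hM : IsSchurMap φ M) : ‖amplification (I := I) hM‖ ≤ ‖M‖ :=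
  LinearMap.mkContinuous₂_norm_le _ (norm_nonneg M) _

lemma amplifiedApply_delta [DecidableEq I] (T : ellTwo (X × I) →L[ℂ] ellTwo (X × I))
    (p q : X × I) : amplifiedApply φ T (delta q) p = conj (φ (p.1, q.1)) * T (delta q) p := by
  rw [amplifiedApply, tsum_eq_single q.1 fun y hy => ?_, blockProj_delta, if_pos rfl]
  rw [blockProj_delta, if_neg (Ne.symm hy), map_zero, lp.coeFn_zero, Pi.zero_apply, mul_zero]

lemma isSchurMap_amplification (hM : IsSchurMap φ M) :
    IsSchurMap (fun p : (X × I) × (X × I) => φ (p.1.1, p.2.1)) (amplification hM) := by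
  classical
  intro T p q
  change ⟪amplifiedVec hM T (delta q), delta p⟫_ℂ = _
  rw [inner_delta_right, inner_delta_right, amplifiedVec_apply, amplifiedApply_delta, map_mul,
    Complex.conj_conj]

end Amplification

theorem IsSchurMultiplier.amplify {X I : Type*} {φ : X × X → ℂ} {C : ℝ}
    (hφ : IsSchurMultiplier φ C) :
    IsSchurMultiplier (fun p : (X × I) × (X × I) => φ (p.1.1, p.2.1)) C := by
  classical
  obtain ⟨M, hMC, hM⟩ := hφ
  exact ⟨amplification hM, (norm_amplification_le hM).trans hMC, isSchurMap_amplification hM⟩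

theorem isSchurMultiplier_amplification_iff_general
    {X I : Type*} [Nonempty I] (φ : X × X → ℂ) (C : ℝ) :
    IsSchurMultiplier φ C ↔
      IsSchurMultiplier (fun p : (X × I) × (X × I) => φ (p.1.1, p.2.1)) C := by
  obtain ⟨i₀⟩ := ‹Nonempty I›
  exact ⟨IsSchurMultiplier.amplify, fun h => h.comp_injective (Prod.mk_left_injective i₀)⟩

/-- The operator norm of a Schur multiplier equals its completely bounded norm: `φ` is a
Schur multiplier on `X` of norm at most `C` iff its amplification
`ψ ((x, i), (y, j)) = φ (x, y)` is a Schur multiplier on `X × I` of norm at most `C`,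
for any nonempty index set `I`. -/
theorem isSchurMultiplier_amplification_iff
    {X I : Type*} [Nonempty I] (φ : X × X → ℂ) (C : ℝ) (hC : 0 ≤ C) :
    IsSchurMultiplier φ C ↔
      IsSchurMultiplier (fun p : (X × I) × (X × I) => φ (p.1.1, p.2.1)) C :=
  isSchurMultiplier_amplification_iff_general φ C
end
end

section
/- Let X be a tree with edge-path distance d, and let λ > 0. Then the kernel (x, y) ↦ e^{−λ d(x, y)} on X × X is positive definite: for every finite sequence x_1, …, x_m of vertices of X and every z_1, …, z_m ∈ ℂ, the sum ∑_{i,j=1}^m z_i · conj(z_j) · e^{−λ d(x_i, x_j)} is a nonnegative real number. -/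
open scoped ComplexOrder ComplexConjugate

namespace TreeExpKernelAux

open SimpleGraph Finset

variable {X : Type*} {G : SimpleGraph X}

private lemma walk_split [DecidableEq X] (hc : G.Connected) {u v w : X} (p : G.Walk u v)
    (hl : p.length = G.dist u v) (hw : w ∈ p.support) :
    G.dist u w + G.dist w v = G.dist u v ∧
      (p.takeUntil w hw).length = G.dist u w ∧
      (p.dropUntil w hw).length = G.dist w v := by
  have h1 : (p.takeUntil w hw).length + (p.dropUntil w hw).length = p.length := by
    rw [← Walk.length_append, Walk.take_spec]
  have h2 := SimpleGraph.dist_le (p.takeUntil w hw)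
  have h3 := SimpleGraph.dist_le (p.dropUntil w hw)
  have h4 := hc.dist_triangle (u := u) (v := w) (w := v)
  omega

private lemma path_length (hG : G.IsTree) {u v : X} (p : G.Walk u v) (hp : p.IsPath) :
    p.length = G.dist u v := by
  obtain ⟨q, hq, hql⟩ := hG.isConnected.exists_path_of_dist u v
  have h : (⟨p, hp⟩ : G.Path u v) = ⟨q, hq⟩ := hG.IsAcyclic.path_unique _ _
  rw [show p = q from congrArg Subtype.val h, hql]

private lemma mem_support_iff [DecidableEq X] (hG : G.IsTree) {u v : X} (p : G.Walk u v)
    (hp : p.IsPath) (w : X) : w ∈ p.support ↔ G.dist u w + G.dist w v = G.dist u v := by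
  constructor
  · intro hw
    exact (walk_split hG.isConnected p (path_length hG p hp) hw).1
  · intro h
    obtain ⟨p1, h1, l1⟩ := hG.isConnected.exists_path_of_dist u w
    obtain ⟨p2, h2, l2⟩ := hG.isConnected.exists_path_of_dist w v
    have hlq : (p1.append p2).length = G.dist u v := by
      rw [Walk.length_append, l1, l2, h]
    have hq : (p1.append p2).IsPath := Walk.isPath_of_length_eq_dist _ hlq
    have he : (⟨p1.append p2, hq⟩ : G.Path u v) = ⟨p, hp⟩ := hG.IsAcyclic.path_unique _ _
    rw [← show p1.append p2 = p from congrArg Subtype.val he, Walk.mem_support_append_iff]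
    exact Or.inl p1.end_mem_support

private lemma between [DecidableEq X] (hG : G.IsTree) {u v w y : X}
    (hw : G.dist u w + G.dist w v = G.dist u v)
    (hy : G.dist u y + G.dist y v = G.dist u v)
    (hle : G.dist y v ≤ G.dist w v) :
    G.dist u y = G.dist u w + G.dist w y ∧ G.dist w y + G.dist y v = G.dist w v := by
  obtain ⟨p, hp, hl⟩ := hG.isConnected.exists_path_of_dist u v
  have hwp : w ∈ p.support := (mem_support_iff hG p hp w).mpr hw
  have hyp : y ∈ p.support := (mem_support_iff hG p hp y).mpr hy
  obtain ⟨hsplit, htake, hdrop⟩ := walk_split hG.isConnected p hl hwp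
  rw [← Walk.take_spec p hwp, Walk.mem_support_append_iff] at hyp
  rcases hyp with hyp | hyp
  · obtain ⟨h5, -, -⟩ := walk_split hG.isConnected _ htake hyp
    have h0 : G.dist y w = 0 := by omega
    have hyw : y = w := (hG.isConnected.dist_eq_zero_iff).mp h0
    subst hyw
    have h00 : G.dist y y = 0 := by simp
    omega
  · obtain ⟨h5, -, -⟩ := walk_split hG.isConnected _ hdrop hyp
    omega

private lemma median (hG : G.IsTree) [DecidableEq X] (o a b : X) :
    ∃ w : X,
      G.dist a w + G.dist w o = G.dist a o ∧
      G.dist b w + G.dist w o = G.dist b o ∧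
      G.dist a w + G.dist w b = G.dist a b ∧
      (∀ v : X, (G.dist a v + G.dist v o = G.dist a o ∧ G.dist b v + G.dist v o = G.dist b o)
        ↔ G.dist w v + G.dist v o = G.dist w o) ∧
      (∀ v : X, G.dist w v + G.dist v o = G.dist w o →
        G.dist a v = G.dist a w + G.dist w v ∧ G.dist b v = G.dist b w + G.dist w v) := by
  obtain ⟨pa, hpa, hla⟩ := hG.isConnected.exists_path_of_dist a o
  obtain ⟨pb, hpb, hlb⟩ := hG.isConnected.exists_path_of_dist b o
  have hone : o ∈ pa.support.toFinset ∩ pb.support.toFinset := by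
    simp [Walk.end_mem_support]
  obtain ⟨w, hwF, hmax⟩ := Finset.exists_max_image (pa.support.toFinset ∩ pb.support.toFinset)
    (fun v => G.dist v o) ⟨o, hone⟩
  simp only [Finset.mem_inter, List.mem_toFinset] at hwF
  have ha : G.dist a w + G.dist w o = G.dist a o := (mem_support_iff hG pa hpa w).mp hwF.1
  have hb : G.dist b w + G.dist w o = G.dist b o := (mem_support_iff hG pb hpb w).mp hwF.2
  have hmax' : ∀ v, G.dist a v + G.dist v o = G.dist a o →
      G.dist b v + G.dist v o = G.dist b o → G.dist v o ≤ G.dist w o := by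
    intro v h1 h2
    exact hmax v (by
      simp only [Finset.mem_inter, List.mem_toFinset]
      exact ⟨(mem_support_iff hG pa hpa v).mpr h1, (mem_support_iff hG pb hpb v).mpr h2⟩)
  have hback : ∀ v : X, G.dist w v + G.dist v o = G.dist w o →
      (G.dist a v + G.dist v o = G.dist a o ∧ G.dist b v + G.dist v o = G.dist b o) ∧
      (G.dist a v = G.dist a w + G.dist w v ∧ G.dist b v = G.dist b w + G.dist w v) := by
    intro v h
    have t1 : G.dist a v ≤ G.dist a w + G.dist w v := hG.isConnected.dist_triangle
    have t2 : G.dist a o ≤ G.dist a v + G.dist v o := hG.isConnected.dist_triangle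
    have t3 : G.dist b v ≤ G.dist b w + G.dist w v := hG.isConnected.dist_triangle
    have t4 : G.dist b o ≤ G.dist b v + G.dist v o := hG.isConnected.dist_triangle
    refine ⟨⟨by omega, by omega⟩, by omega, by omega⟩
  refine ⟨w, ha, hb, ?_, ?_, fun v h => (hback v h).2⟩
  · obtain ⟨p1, h1, l1⟩ := hG.isConnected.exists_path_of_dist a w
    obtain ⟨p2, h2, l2⟩ := hG.isConnected.exists_path_of_dist w b
    have hpath : (p1.append p2).IsPath := by
      rw [Walk.isPath_def, Walk.support_append]
      refine List.Nodup.append h1.support_nodup (h2.support_nodup.tail) ?_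
      intro u hu1 hu2
      have hu2' : u ∈ p2.support := List.mem_of_mem_tail hu2
      obtain ⟨e1, -, -⟩ := walk_split hG.isConnected p1 l1 hu1
      obtain ⟨e2, -, -⟩ := walk_split hG.isConnected p2 l2 hu2'
      have t1 : G.dist u o ≤ G.dist u w + G.dist w o := hG.isConnected.dist_triangle
      have t2 : G.dist a o ≤ G.dist a u + G.dist u o := hG.isConnected.dist_triangle
      have t3 : G.dist b o ≤ G.dist b u + G.dist u o := hG.isConnected.dist_triangle
      have c1 : G.dist u w = G.dist w u := SimpleGraph.dist_comm
      have c2 : G.dist b u = G.dist u b := SimpleGraph.dist_comm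
      have c3 : G.dist b w = G.dist w b := SimpleGraph.dist_comm
      have hSa : G.dist a u + G.dist u o = G.dist a o := by omega
      have hSb : G.dist b u + G.dist u o = G.dist b o := by omega
      have hmx := hmax' u hSa hSb
      have h0 : G.dist u w = 0 := by omega
      have huw : u = w := hG.isConnected.dist_eq_zero_iff.mp h0
      subst huw
      have hnd := h2.support_nodup
      rw [Walk.support_eq_cons] at hnd
      exact (List.nodup_cons.mp hnd).1 hu2
    have hlen := path_length hG (p1.append p2) hpath
    rw [Walk.length_append, l1, l2] at hlen
    exact hlen
  · intro v
    constructor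
    · rintro ⟨h1, h2⟩
      have hle := hmax' v h1 h2
      exact (between hG ha h1 hle).2
    · intro h
      exact (hback v h).1

/-- The feature vector giving a Gram representation of the exponential kernel. -/
private noncomputable def xi (G : SimpleGraph X) [DecidableEq X] (q : ℝ) (o a v : X) : ℝ :=
  if G.dist a v + G.dist v o = G.dist a o then
    (if v = o then q ^ G.dist a o else Real.sqrt (1 - q ^ 2) * q ^ G.dist a v)
  else 0

private lemma gram (hG : G.IsTree) [DecidableEq X] {q : ℝ} (hq0 : 0 < q) (hq1 : q < 1)
    (o a b : X) (T : Finset X)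
    (hTa : ∀ v, G.dist a v + G.dist v o = G.dist a o → v ∈ T)
    (hTb : ∀ v, G.dist b v + G.dist v o = G.dist b o → v ∈ T) :
    ∑ v ∈ T, xi G q o a v * xi G q o b v = q ^ G.dist a b := by
  have hq2 : (0:ℝ) ≤ 1 - q ^ 2 := by nlinarith
  obtain ⟨w, ha, hb, hab, hiff, hadd⟩ := median hG o a b
  obtain ⟨p, hp, hl⟩ := hG.isConnected.exists_path_of_dist w o
  have hsub : p.support.toFinset ⊆ T := by
    intro v hv
    rw [List.mem_toFinset] at hv
    exact hTa v (((hiff v).mpr ((mem_support_iff hG p hp v).mp hv)).1)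
  have hzero : ∀ v ∈ T, v ∉ p.support.toFinset → xi G q o a v * xi G q o b v = 0 := by
    intro v _ hv'
    rw [List.mem_toFinset, mem_support_iff hG p hp v] at hv'
    have hv'' := mt (hiff v).mp hv'
    rcases not_and_or.mp hv'' with h | h <;> simp [xi, h]
  rw [← Finset.sum_subset hsub hzero]
  have hSw : ∀ v ∈ p.support.toFinset, G.dist w v + G.dist v o = G.dist w o := by
    intro v hv
    rw [List.mem_toFinset] at hv
    exact (mem_support_iff hG p hp v).mp hv
  have hinj : ∀ v₁ (h₁ : v₁ ∈ p.support.toFinset) v₂ (h₂ : v₂ ∈ p.support.toFinset),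
      G.dist w v₁ = G.dist w v₂ → v₁ = v₂ := by
    intro v₁ h₁ v₂ h₂ he
    have s1 := hSw v₁ h₁
    have s2 := hSw v₂ h₂
    rcases le_total (G.dist v₁ o) (G.dist v₂ o) with hle | hle
    · have hbtw := (between hG s2 s1 hle).1
      have h0 : G.dist v₂ v₁ = 0 := by omega
      exact (hG.isConnected.dist_eq_zero_iff.mp h0).symm
    · have hbtw := (between hG s1 s2 hle).1
      have h0 : G.dist v₁ v₂ = 0 := by omega
      exact hG.isConnected.dist_eq_zero_iff.mp h0
  have hcard : (Finset.range (G.dist w o + 1)).card ≤ p.support.toFinset.card := by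
    rw [Finset.card_range, List.toFinset_card_of_nodup hp.support_nodup,
      Walk.length_support, hl]
  have hsurj := Finset.surj_on_of_inj_on_of_card_le
    (s := p.support.toFinset) (t := Finset.range (G.dist w o + 1))
    (fun v _ => G.dist w v)
    (fun v hv => by
      have := hSw v hv
      simp only [Finset.mem_range]
      omega)
    (fun a₁ a₂ h₁ h₂ he => hinj a₁ h₁ a₂ h₂ he)
    hcard
  rw [Finset.sum_bij (t := Finset.range (G.dist w o + 1))
    (g := fun k => if k = G.dist w o then
        q ^ (G.dist a w + G.dist w o) * q ^ (G.dist b w + G.dist w o)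
      else (1 - q ^ 2) * (q ^ (G.dist a w + k) * q ^ (G.dist b w + k)))
    (i := fun v _ => G.dist w v)
    (fun v hv => by
      have := hSw v hv
      simp only [Finset.mem_range]
      omega)
    hinj
    (fun k hk => by
      obtain ⟨v, hv, hvk⟩ := hsurj k hk
      exact ⟨v, hv, hvk.symm⟩)
    ?_]
  · -- evaluate the reindexed sum
    rw [Finset.sum_range_succ, if_pos rfl]
    have hgeo : ∀ k ∈ Finset.range (G.dist w o), (if k = G.dist w o then
        q ^ (G.dist a w + G.dist w o) * q ^ (G.dist b w + G.dist w o)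
        else (1 - q ^ 2) * (q ^ (G.dist a w + k) * q ^ (G.dist b w + k)))
        = ((1 - q ^ 2) * (q ^ G.dist a w * q ^ G.dist b w)) * (q ^ 2) ^ k := by
      intro k hk
      rw [Finset.mem_range] at hk
      rw [if_neg (by omega)]
      rw [pow_add, pow_add, ← pow_mul]
      ring
    have hne : (q:ℝ) ^ 2 ≠ 1 := by nlinarith
    have hne' : (q:ℝ) ^ 2 - 1 ≠ 0 := sub_ne_zero.mpr hne
    rw [Finset.sum_congr rfl hgeo, ← Finset.mul_sum, geom_sum_eq hne,
      ← hab, show G.dist w b = G.dist b w from SimpleGraph.dist_comm,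
      pow_add, pow_add, pow_add]
    have hq2l : (q:ℝ) ^ G.dist w o * q ^ G.dist w o = (q ^ 2) ^ G.dist w o := by
      rw [← pow_add, ← pow_mul, two_mul]
    field_simp
    linear_combination (q ^ 2 - 1) * (q ^ G.dist a w * q ^ G.dist b w) * hq2l
  · -- values match
    intro v hv
    show xi G q o a v * xi G q o b v = if G.dist w v = G.dist w o then
        q ^ (G.dist a w + G.dist w o) * q ^ (G.dist b w + G.dist w o)
      else (1 - q ^ 2) * (q ^ (G.dist a w + G.dist w v) * q ^ (G.dist b w + G.dist w v))
    have hs := hSw v hv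
    obtain ⟨da, db⟩ := hadd v hs
    have hSa := ((hiff v).mpr hs).1
    have hSb := ((hiff v).mpr hs).2
    by_cases hvo : v = o
    · have h0 : G.dist v o = 0 := by rw [hvo]; simp
      rw [xi, xi, if_pos hSa, if_pos hSb, if_pos hvo, if_pos hvo,
        if_pos (show G.dist w v = G.dist w o by omega)]
      rw [← ha, ← hb]
    · have hkne : G.dist w v ≠ G.dist w o := by
        intro hk
        have h0 : G.dist v o = 0 := by omega
        exact hvo (hG.isConnected.dist_eq_zero_iff.mp h0)
      rw [xi, xi, if_pos hSa, if_pos hSb, if_neg hvo, if_neg hvo, if_neg hkne, da, db]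
      rw [show Real.sqrt (1 - q ^ 2) * q ^ (G.dist a w + G.dist w v) *
          (Real.sqrt (1 - q ^ 2) * q ^ (G.dist b w + G.dist w v))
        = (Real.sqrt (1 - q ^ 2) * Real.sqrt (1 - q ^ 2)) *
          (q ^ (G.dist a w + G.dist w v) * q ^ (G.dist b w + G.dist w v)) from by ring,
        Real.mul_self_sqrt hq2]

end TreeExpKernelAux

/-- On a tree, the exponential kernel `(x, y) ↦ exp (−λ d(x, y))` of the edge-path
distance is positive definite for every `λ > 0`: all the finite quadratic sums
`∑ z_i conj (z_j) exp (−λ d(x_i, x_j))` are nonnegative real numbers. -/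
theorem tree_exp_kernel_posdef {X : Type*} (G : SimpleGraph X) (hG : G.IsTree)
    (lam : ℝ) (hlam : 0 < lam) (m : ℕ) (x : Fin m → X) (z : Fin m → ℂ) :
    0 ≤ ∑ i, ∑ j, z i * conj (z j) *
        (Real.exp (-lam * (G.dist (x i) (x j) : ℝ)) : ℂ) := by
  classical
  rcases Nat.eq_zero_or_pos m with hm | hm
  · subst hm; simp
  set o : X := x ⟨0, hm⟩ with ho
  set q : ℝ := Real.exp (-lam) with hqdef
  have hq0 : 0 < q := Real.exp_pos _
  have hq1 : q < 1 := Real.exp_lt_one_iff.mpr (by linarith)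
  have hex : ∀ i : Fin m, ∃ p : G.Walk (x i) o, p.IsPath ∧ p.length = G.dist (x i) o :=
    fun i => hG.isConnected.exists_path_of_dist _ _
  choose p hp hlp using hex
  set T : Finset X := Finset.univ.biUnion (fun i => (p i).support.toFinset) with hT
  have hTmem : ∀ (i : Fin m) v, G.dist (x i) v + G.dist v o = G.dist (x i) o → v ∈ T := by
    intro i v h
    exact Finset.mem_biUnion.mpr ⟨i, Finset.mem_univ _, List.mem_toFinset.mpr
      ((TreeExpKernelAux.mem_support_iff hG (p i) (hp i) v).mpr h)⟩
  have hgram : ∀ i j : Fin m, ∑ v ∈ T,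
      TreeExpKernelAux.xi G q o (x i) v * TreeExpKernelAux.xi G q o (x j) v
        = q ^ G.dist (x i) (x j) :=
    fun i j => TreeExpKernelAux.gram hG hq0 hq1 o (x i) (x j) T (hTmem i) (hTmem j)
  have hcast : ∀ i j : Fin m, (Real.exp (-lam * (G.dist (x i) (x j) : ℝ)) : ℂ)
      = ((q ^ G.dist (x i) (x j) : ℝ) : ℂ) := by
    intro i j
    congr 1
    rw [mul_comm, Real.exp_nat_mul]
  have e1 : ∀ i j : Fin m, (Real.exp (-lam * (G.dist (x i) (x j) : ℝ)) : ℂ)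
      = ∑ v ∈ T, (TreeExpKernelAux.xi G q o (x i) v : ℂ)
          * (TreeExpKernelAux.xi G q o (x j) v : ℂ) := by
    intro i j
    rw [hcast i j, ← hgram i j]
    push_cast
    rfl
  have step1 : ∑ i, ∑ j, z i * conj (z j) *
        (Real.exp (-lam * (G.dist (x i) (x j) : ℝ)) : ℂ)
      = ∑ v ∈ T, (∑ i, z i * (TreeExpKernelAux.xi G q o (x i) v : ℂ))
          * conj (∑ i, z i * (TreeExpKernelAux.xi G q o (x i) v : ℂ)) := by
    simp_rw [e1, Finset.mul_sum]
    conv_lhs => enter [2, i]; rw [Finset.sum_comm]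
    rw [Finset.sum_comm]
    refine Finset.sum_congr rfl fun v _ => ?_
    rw [map_sum, Finset.sum_mul_sum]
    refine Finset.sum_congr rfl fun i _ => Finset.sum_congr rfl fun j _ => ?_
    rw [map_mul, Complex.conj_ofReal]
    ring
  rw [step1]
  refine Finset.sum_nonneg fun v _ => ?_
  rw [Complex.mul_conj]
  exact Complex.zero_le_real.mpr (Complex.normSq_nonneg _)
end

section
/- Let Γ be a countable discrete group that is weakly amenable with Cowling–Haagerup constant Λ(Γ) = 1 (i.e. weakly amenable with constant at most C for every C > 1). Then there exist a function ψ : Γ → [0, ∞), a complex Hilbert space H, and maps R, S : Γ → H such that ψ(y⁻¹x) = ‖R(x) − R(y)‖² + ‖S(x) + S(y)‖² for all x, y ∈ Γ, and ψ is proper: for every M > 0 the set {x ∈ Γ : ψ(x) ≤ M} is finite. -/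
open scoped InnerProductSpace

noncomputable section

/-- A discrete group `Γ` is weakly amenable with constant at most `C` if for every finite
subset `F` and every `ε > 0` there is a finitely supported `φ : Γ → ℂ` with
`|φ s − 1| ≤ ε` on `F`, which is a Herz–Schur multiplier of norm at most `C`, i.e.
`φ (s⁻¹ t) = ⟪ξ t, η s⟫` for bounded Hilbert-space-valued maps `ξ, η` whose sup-norms
have product at most `C`. -/
def WeaklyAmenableWithConst (Γ : Type*) [Group Γ] (C : ℝ) : Prop :=
  ∀ (F : Finset Γ) (ε : ℝ), 0 < ε →
    ∃ φ : Γ → ℂ, (Function.support φ).Finite ∧ (∀ s ∈ F, ‖φ s - 1‖ ≤ ε) ∧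
      ∃ (H : Type) (_ : NormedAddCommGroup H) (_ : InnerProductSpace ℂ H)
        (_ : CompleteSpace H) (ξ η : Γ → H) (A B : ℝ),
        0 ≤ A ∧ 0 ≤ B ∧ (∀ t, ‖ξ t‖ ≤ A) ∧ (∀ s, ‖η s‖ ≤ B) ∧ A * B ≤ C ∧
        ∀ s t : Γ, φ (s⁻¹ * t) = ⟪ξ t, η s⟫_ℂ

/-!
Weak amenability applied to `F ∪ F⁻¹ ∪ {1}` gives `φ`, `δ`-close to `1` there, with
`φ (s⁻¹ t) = ⟪a t, b s⟫` and `‖a t‖², ‖b s‖² ≤ AB ≤ 1 + δ` (after rescaling `ξ, η`). Padding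
`(a, b)` and `(b, a)` by scalar coordinates gives vectors `u t, v t` of constant norm `√(2AB)` with
`⟪u t, v s⟫ = φ (s⁻¹ t) + conj (φ (t⁻¹ s))`, and by the parallelogram law `R = (u + v) / 2`,
`S = (u - v) / 2` realise `ψ g = 4AB - 2 re φ g - 2 re φ g⁻¹`. This `ψ` is at most `8δ` on `F`
and at least `4AB ≥ 2` off the finite set `supp φ ∪ (supp φ)⁻¹`.

Along an exhaustion `Fₙ` of `Γ` with `δₙ = 2⁻ⁿ / 8`, the series `∑ ψₙ` converges pointwise,
is realised in the `ℓ²`-sum of the Hilbert spaces (with `R x = (Rₙ x - Rₙ 1)ₙ`), and is proper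
because `∑ ψₙ ≤ M` forces `ψₙ < 2` for some `n < M / 2`.
-/

section InnerProductSpace

variable {𝕜 E : Type*} [RCLike 𝕜] [NormedAddCommGroup E] [InnerProductSpace 𝕜 E]

theorem norm_half_sub_sq_add_norm_half_add_sq (p q r s : E) :
    ‖(2⁻¹ : 𝕜) • (p + q) - (2⁻¹ : 𝕜) • (r + s)‖ ^ 2
        + ‖(2⁻¹ : 𝕜) • (p - q) + (2⁻¹ : 𝕜) • (r - s)‖ ^ 2
      = (‖p - s‖ ^ 2 + ‖q - r‖ ^ 2) / 2 := by
  have h₁ : (2⁻¹ : 𝕜) • (p + q) - (2⁻¹ : 𝕜) • (r + s) = (2⁻¹ : 𝕜) • (p - s + (q - r)) := by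
    rw [← smul_sub]; congr 1; abel
  have h₂ : (2⁻¹ : 𝕜) • (p - q) + (2⁻¹ : 𝕜) • (r - s) = (2⁻¹ : 𝕜) • (p - s - (q - r)) := by
    rw [← smul_add]; congr 1; abel
  rw [h₁, h₂, norm_smul, norm_smul, mul_pow, mul_pow, ← mul_add,
    parallelogram_law_with_norm 𝕜]
  norm_num
  ring

theorem exists_rescaled_inner_eq {X Y : Type*} (ξ : X → E) (η : Y → E) {A B : ℝ}
    (hA : 0 < A) (hB : 0 < B) (hξ : ∀ t, ‖ξ t‖ ≤ A) (hη : ∀ s, ‖η s‖ ≤ B) :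
    ∃ (a : X → E) (b : Y → E), (∀ t, ‖a t‖ ^ 2 ≤ A * B) ∧ (∀ s, ‖b s‖ ^ 2 ≤ A * B) ∧
      ∀ s t, ⟪a t, b s⟫_𝕜 = ⟪ξ t, η s⟫_𝕜 := by
  have hc : 0 < B / A := div_pos hB hA
  refine ⟨fun t => (√(B / A) : 𝕜) • ξ t, fun s => (((√(B / A))⁻¹ : ℝ) : 𝕜) • η s,
    fun t => ?_, fun s => ?_, fun s t => ?_⟩
  · calc ‖(√(B / A) : 𝕜) • ξ t‖ ^ 2 = B / A * ‖ξ t‖ ^ 2 := by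
          rw [norm_smul, RCLike.norm_ofReal, mul_pow, sq_abs, Real.sq_sqrt hc.le]
      _ ≤ B / A * A ^ 2 := by gcongr; exact hξ t
      _ = A * B := by field_simp
  · calc ‖(((√(B / A))⁻¹ : ℝ) : 𝕜) • η s‖ ^ 2 = A / B * ‖η s‖ ^ 2 := by
          rw [norm_smul, RCLike.norm_ofReal, mul_pow, sq_abs, inv_pow, Real.sq_sqrt hc.le,
            inv_div]
      _ ≤ A / B * B ^ 2 := by gcongr; exact hη s
      _ = A * B := by field_simp
  · rw [inner_smul_real_left, inner_smul_real_right, smul_smul,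
      mul_inv_cancel₀ (Real.sqrt_pos.2 hc).ne', one_smul]

end InnerProductSpace

theorem exists_padded_inner_eq {X : Type*} {H : Type} [NormedAddCommGroup H]
    [InnerProductSpace ℂ H] [CompleteSpace H] (a b : X → H) {D : ℝ}
    (hD : ∀ t, ‖a t‖ ^ 2 + ‖b t‖ ^ 2 ≤ D) :
    ∃ (K : Type) (_ : NormedAddCommGroup K) (_ : InnerProductSpace ℂ K) (_ : CompleteSpace K)
      (u v : X → K), (∀ t, ‖u t‖ ^ 2 = D) ∧ (∀ t, ‖v t‖ ^ 2 = D) ∧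
        ∀ s t, ⟪u t, v s⟫_ℂ = ⟪a t, b s⟫_ℂ + ⟪b t, a s⟫_ℂ := by
  set pad : X → ℝ := fun t => √(D - ‖a t‖ ^ 2 - ‖b t‖ ^ 2)
  have hpad : ∀ t, ‖(pad t : ℂ)‖ ^ 2 = D - ‖a t‖ ^ 2 - ‖b t‖ ^ 2 := fun t => by
    rw [Complex.norm_real, Real.norm_eq_abs, sq_abs, Real.sq_sqrt (by linarith [hD t])]
  refine ⟨WithLp 2 (WithLp 2 (H × H) × WithLp 2 (ℂ × ℂ)), inferInstance, inferInstance,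
    inferInstance, fun t => WithLp.toLp 2 (WithLp.toLp 2 (a t, b t), WithLp.toLp 2 (pad t, 0)),
    fun t => WithLp.toLp 2 (WithLp.toLp 2 (b t, a t), WithLp.toLp 2 (0, pad t)),
    fun t => ?_, fun t => ?_, fun s t => ?_⟩
  · simp only [WithLp.prod_norm_sq_eq_of_L2, WithLp.toLp_fst, WithLp.toLp_snd, hpad, norm_zero]
    ring
  · simp only [WithLp.prod_norm_sq_eq_of_L2, WithLp.toLp_fst, WithLp.toLp_snd, hpad, norm_zero]
    ring
  · simp [WithLp.prod_inner_apply]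

theorem memℓp_two_of_summable_sq {ι : Type*} {E : ι → Type*} [∀ i, NormedAddCommGroup (E i)]
    {f : ∀ i, E i} (hf : Summable fun i => ‖f i‖ ^ 2) : Memℓp f 2 :=
  memℓp_gen (by simpa using hf)

theorem lp.norm_sq_eq_tsum {ι : Type*} {E : ι → Type*} [∀ i, NormedAddCommGroup (E i)]
    (f : lp E 2) : ‖f‖ ^ 2 = ∑' i, ‖f i‖ ^ 2 := by
  simpa using lp.norm_rpow_eq_tsum (p := 2) (by norm_num) f

theorem finite_setOf_tsum_le {X : Type*} {f : ℕ → X → ℝ} (hf : ∀ n x, 0 ≤ f n x)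
    (hsum : ∀ x, Summable fun n => f n x) {c : ℝ} (hc : 0 < c)
    (hfin : ∀ n, {x | f n x < c}.Finite) (M : ℝ) : {x | ∑' n, f n x ≤ M}.Finite := by
  obtain ⟨N, hN⟩ := exists_nat_gt (M / c)
  refine ((Set.finite_Iio N).biUnion fun n _ => hfin n).subset fun x hx => ?_
  by_contra hx'
  simp only [Set.mem_iUnion, Set.mem_Iio, Set.mem_ofPred_eq, not_exists, not_lt] at hx hx'
  have : c * N ≤ ∑' n, f n x := calc
    c * N = ∑ _n ∈ Finset.range N, c := by simp [mul_comm]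
    _ ≤ ∑ n ∈ Finset.range N, f n x := Finset.sum_le_sum fun n hn => hx' n (Finset.mem_range.1 hn)
    _ ≤ ∑' n, f n x := (hsum x).sum_le_tsum _ fun n _ => hf n x
  rw [div_lt_iff₀ hc] at hN
  linarith

section RSRepresentation

variable {Γ : Type*} [Group Γ]

def HasRSRepresentation (ψ : Γ → ℝ) : Prop :=
  ∃ (H : Type) (_ : NormedAddCommGroup H) (_ : InnerProductSpace ℂ H) (_ : CompleteSpace H)
    (R S : Γ → H), ∀ x y : Γ, ψ (y⁻¹ * x) = ‖R x - R y‖ ^ 2 + ‖S x + S y‖ ^ 2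

theorem HasRSRepresentation.nonneg {ψ : Γ → ℝ} (hψ : HasRSRepresentation ψ) (g : Γ) :
    0 ≤ ψ g := by
  obtain ⟨H, _, _, _, R, S, hRS⟩ := hψ
  simpa using (hRS g 1).ge.trans' (by positivity)

theorem hasRSRepresentation_of_inner {H : Type} [NormedAddCommGroup H] [InnerProductSpace ℂ H]
    [CompleteSpace H] (a b : Γ → H) {D : ℝ} (hD : ∀ t, ‖a t‖ ^ 2 + ‖b t‖ ^ 2 ≤ D)
    {φ : Γ → ℂ} (hφ : ∀ s t, φ (s⁻¹ * t) = ⟪a t, b s⟫_ℂ) :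
    HasRSRepresentation fun g => 2 * D - 2 * (φ g).re - 2 * (φ g⁻¹).re := by
  obtain ⟨K, _, _, _, u, v, hu, hv, huv⟩ := exists_padded_inner_eq a b hD
  have hre : ∀ x y : Γ, RCLike.re ⟪u x, v y⟫_ℂ = (φ (y⁻¹ * x)).re + (φ (x⁻¹ * y)).re := by
    intro x y
    rw [huv, map_add, hφ, hφ, inner_re_symm (𝕜 := ℂ) (b x)]
    rfl
  refine ⟨K, inferInstance, inferInstance, inferInstance, fun x => (2⁻¹ : ℂ) • (u x + v x),
    fun x => (2⁻¹ : ℂ) • (u x - v x), fun x y => ?_⟩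
  dsimp only
  rw [norm_half_sub_sq_add_norm_half_add_sq, norm_sub_rev (v x), norm_sub_sq (𝕜 := ℂ),
    norm_sub_sq (𝕜 := ℂ), hu, hv, hu, hv, hre, hre, mul_inv_rev, inv_inv]
  ring

theorem HasRSRepresentation.tsum {ι : Type} {ψ : ι → Γ → ℝ}
    (hψ : ∀ i, HasRSRepresentation (ψ i)) (hsum : ∀ g, Summable fun i => ψ i g) :
    HasRSRepresentation fun g => ∑' i, ψ i g := by
  choose H _ _ _ R S hRS using hψ
  have hR : ∀ i x y, ‖R i x - R i y‖ ^ 2 ≤ ψ i (y⁻¹ * x) := fun i x y =>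
    (hRS i x y).ge.trans' (le_add_of_nonneg_right (by positivity))
  have hS : ∀ i x y, ‖S i x + S i y‖ ^ 2 ≤ ψ i (y⁻¹ * x) := fun i x y =>
    (hRS i x y).ge.trans' (le_add_of_nonneg_left (by positivity))
  have hS₁ : ∀ i x, ‖S i x‖ ^ 2 ≤ ψ i 1 := fun i x => by
    have := hS i x x
    rw [inv_mul_cancel, ← two_smul ℝ, norm_smul, Real.norm_two] at this
    nlinarith [sq_nonneg ‖S i x‖]
  let R' : Γ → lp H 2 := fun x => ⟨fun i => R i x - R i 1, memℓp_two_of_summable_sq <|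
    (hsum x).of_nonneg_of_le (fun _ => by positivity) fun i => by simpa using hR i x 1⟩
  let S' : Γ → lp H 2 := fun x => ⟨fun i => S i x, memℓp_two_of_summable_sq <|
    (hsum 1).of_nonneg_of_le (fun _ => by positivity) fun i => hS₁ i x⟩
  refine ⟨lp H 2, inferInstance, inferInstance, inferInstance, R', S', fun x y => ?_⟩
  have hsR : Summable fun i => ‖R i x - R i y‖ ^ 2 :=
    (hsum _).of_nonneg_of_le (fun _ => by positivity) fun i => hR i x y
  have hsS : Summable fun i => ‖S i x + S i y‖ ^ 2 :=
    (hsum _).of_nonneg_of_le (fun _ => by positivity) fun i => hS i x y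
  calc ∑' i, ψ i (y⁻¹ * x) = ∑' i, (‖R i x - R i y‖ ^ 2 + ‖S i x + S i y‖ ^ 2) :=
        tsum_congr fun i => hRS i x y
    _ = ∑' i, ‖R i x - R i y‖ ^ 2 + ∑' i, ‖S i x + S i y‖ ^ 2 := hsR.tsum_add hsS
    _ = ‖R' x - R' y‖ ^ 2 + ‖S' x + S' y‖ ^ 2 := by
      rw [lp.norm_sq_eq_tsum, lp.norm_sq_eq_tsum]
      congr 1
      refine tsum_congr fun i => ?_
      rw [lp.coeFn_sub, Pi.sub_apply, sub_sub_sub_cancel_right]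

theorem WeaklyAmenableWithConst.exists_hasRSRepresentation {δ : ℝ}
    (hw : WeaklyAmenableWithConst Γ (1 + δ)) (hδ : 0 < δ) (hδ' : δ ≤ 1 / 2) (F : Finset Γ) :
    ∃ ψ : Γ → ℝ, HasRSRepresentation ψ ∧ (∀ g ∈ F, ψ g ≤ 8 * δ) ∧ {g | ψ g < 2}.Finite := by
  classical
  obtain ⟨φ, hφfin, hφF, H, _, _, _, ξ, η, A, B, hA, hB, hξ, hη, hAB, hφ⟩ :=
    hw (insert 1 (F ∪ F.image (·⁻¹))) δ hδ
  have hre : ∀ g ∈ insert 1 (F ∪ F.image (·⁻¹)), 1 - δ ≤ (φ g).re := fun g hg => by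
    have := (Complex.abs_re_le_norm (φ g - 1)).trans (hφF g hg)
    rw [Complex.sub_re, Complex.one_re, abs_le] at this
    linarith
  have hAB' : 1 - δ ≤ A * B := calc
    1 - δ ≤ (φ 1).re := hre 1 (Finset.mem_insert_self _ _)
    _ ≤ ‖φ 1‖ := Complex.re_le_norm _
    _ = ‖⟪ξ 1, η 1⟫_ℂ‖ := by rw [← hφ, inv_one, one_mul]
    _ ≤ A * B := (norm_inner_le_norm _ _).trans (mul_le_mul (hξ 1) (hη 1) (norm_nonneg _) hA)
  have hABpos : 0 < A * B := by linarith
  obtain ⟨a, b, ha, hb, hab⟩ := exists_rescaled_inner_eq (𝕜 := ℂ) ξ η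
    (pos_of_mul_pos_left hABpos hB) (pos_of_mul_pos_right hABpos hA) hξ hη
  refine ⟨_, hasRSRepresentation_of_inner a b (D := 2 * (A * B))
    (fun t => by linarith [ha t, hb t]) (fun s t => (hφ s t).trans (hab s t).symm),
    fun g hg => ?_, ?_⟩
  · have h₁ := hre g (by simp [hg])
    have h₂ := hre g⁻¹ (by simp [hg])
    linarith
  · refine (hφfin.union (hφfin.preimage inv_injective.injOn)).subset fun g hg => ?_
    by_contra hg'
    simp only [Set.mem_union, Set.mem_preimage, Function.mem_support, not_or, not_not] at hg'
    simp only [Set.mem_ofPred_eq, hg'.1, hg'.2, Complex.zero_re] at hg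
    linarith

end RSRepresentation

/-- **Knudby.** If a countable discrete group has Cowling–Haagerup constant `1`, then it
admits a proper nonnegative function `ψ` of the form
`ψ (y⁻¹ x) = ‖R x − R y‖² + ‖S x + S y‖²` for Hilbert-space-valued maps `R, S`. -/
theorem knudby_weak_haagerup {Γ : Type*} [Group Γ] [Countable Γ]
    (h : ∀ C : ℝ, 1 < C → WeaklyAmenableWithConst Γ C) :
    ∃ (ψ : Γ → ℝ) (H : Type) (_ : NormedAddCommGroup H) (_ : InnerProductSpace ℂ H)
      (_ : CompleteSpace H) (R S : Γ → H),
      (∀ x, 0 ≤ ψ x) ∧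
      (∀ x y : Γ, ψ (y⁻¹ * x) = ‖R x - R y‖ ^ 2 + ‖S x + S y‖ ^ 2) ∧
      (∀ M : ℝ, 0 < M → {x : Γ | ψ x ≤ M}.Finite) := by
  classical
  obtain ⟨e, he⟩ := exists_surjective_nat Γ
  have hstep : ∀ n : ℕ, ∃ ψ : Γ → ℝ, HasRSRepresentation ψ ∧
      (∀ k ≤ n, ψ (e k) ≤ (1 / 2) ^ n) ∧ {g | ψ g < 2}.Finite := by
    intro n
    have hpow : ((1 : ℝ) / 2) ^ n ≤ 1 := pow_le_one₀ (by norm_num) (by norm_num)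
    obtain ⟨ψ, hψ, hsmall, hfin⟩ :=
      (h (1 + (1 / 2) ^ n / 8) (lt_add_of_pos_right 1 (by positivity))).exists_hasRSRepresentation
        (by positivity) (by linarith) ((Finset.range (n + 1)).image e)
    refine ⟨ψ, hψ, fun k hk => (hsmall (e k) ?_).trans_eq (by ring), hfin⟩
    exact Finset.mem_image_of_mem e (Finset.mem_range.2 (Nat.lt_succ_of_le hk))
  choose ψ hψ hsmall hfin using hstep
  have hsum : ∀ g, Summable fun n => ψ n g := by
    intro g
    obtain ⟨m, rfl⟩ := he g
    refine summable_geometric_two.of_norm_bounded_eventually_nat ?_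
    filter_upwards [Filter.eventually_ge_atTop m] with n hn
    rw [Real.norm_of_nonneg ((hψ n).nonneg _)]
    exact hsmall n m hn
  have hnonneg : ∀ n g, 0 ≤ ψ n g := fun n => (hψ n).nonneg
  obtain ⟨H, _, _, _, R, S, hRS⟩ := HasRSRepresentation.tsum hψ hsum
  exact ⟨_, H, inferInstance, inferInstance, inferInstance, R, S,
    fun g => tsum_nonneg fun n => hnonneg n g, hRS,
    fun M _ => finite_setOf_tsum_le hnonneg hsum two_pos hfin M⟩
end
end
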